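/- The subsemimodule P = {(0,0), (0,1), (1,1)} of the free 𝔹-semimodule 𝔹² is a finitely generated projective 𝔹-semimodule that is not strongly projective. -/

import Mathlib

/-- The Boolean semifield `𝔹 = ({0,1}, max, min)`. -/
inductive Bsf : Type
  | zero
  | one
  deriving DecidableEq

instance : Fintype Bsf := ⟨{.zero, .one}, fun x => by cases x <;> decide⟩

instance : Zero Bsf := ⟨.zero⟩
instance : One Bsf := ⟨.one⟩
instance : Add Bsf := ⟨fun a b => match a, b with | .zero, x => x | .one, _ => .one⟩
instance : Mul Bsf := ⟨fun a b => match a, b with | .zero, _ => .zero | .one, x => x⟩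

instance : CommSemiring Bsf where
  nsmul := nsmulRec
  add_assoc := by decide
  zero_add := by decide
  add_zero := by decide
  add_comm := by decide
  mul_assoc := by decide
  one_mul := by decide
  mul_one := by decide
  left_distrib := by decide
  right_distrib := by decide
  zero_mul := by decide
  mul_zero := by decide
  mul_comm := by decide

/-- `p` and `q` decompose `M` as an (internal) direct sum. -/
def IsSummandDecomp {S M : Type} [Semiring S] [AddCommMonoid M] [Module S M]
    (p q : Submodule S M) : Prop :=
  Function.Bijective fun ab : p × q => (ab.1 : M) + (ab.2 : M)

/-- A semimodule is strongly projective if it is isomorphic to a direct summand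
of a free semimodule. -/
def StronglyProjective (S P : Type) [Semiring S] [AddCommMonoid P] [Module S P] : Prop :=
  ∃ (ι : Type) (p q : Submodule S (ι →₀ S)), IsSummandDecomp p q ∧ Nonempty (P ≃ₗ[S] p)

/-- The subsemimodule `{(0,0), (0,1), (1,1)}` of the free `𝔹`-semimodule `𝔹²`. -/
def Pex : Submodule Bsf (Bsf × Bsf) where
  carrier := {x | x = (0, 0) ∨ x = (0, 1) ∨ x = (1, 1)}
  add_mem' := by
    intro a b ha hb
    simp only [Set.mem_setOf_eq] at ha hb ⊢
    rcases a with ⟨a1, a2⟩; rcases b with ⟨b1, b2⟩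
    rcases a1 <;> rcases a2 <;> rcases b1 <;> rcases b2 <;> revert ha hb <;> decide
  zero_mem' := Or.inl rfl
  smul_mem' := by
    intro c x hx
    simp only [Set.mem_setOf_eq] at hx ⊢
    rcases x with ⟨x1, x2⟩
    rcases c <;> rcases x1 <;> rcases x2 <;> revert hx <;> decide

/-! `Pex` is a retract of `𝔹²` via `(a, b) ↦ (a, a + b)`. In a decomposition `p ⊕ q` of a free
`𝔹`-semimodule, a basis vector `e_j` lies in `p` as soon as some `x ∈ p` has `x j ≠ 0`: its
`q`-component `z ≤ e_j ≤ x` satisfies `x + z = x + 0`. If `p ≅ Pex`, the image of `(1, 1)` strictly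
dominates the nonzero image of `(0, 1)`, so it has two support points `i ≠ j`; then `e_i, e_j ∈ p`
are incomparable, whereas `Pex` is a chain. -/

theorem Bsf.add_eq_zero_iff {x y : Bsf} : x + y = 0 ↔ x = 0 ∧ y = 0 := by
  revert x y; decide

theorem Bsf.eq_one_of_ne_zero {x : Bsf} (hx : x ≠ 0) : x = 1 := by
  revert x; decide

theorem Bsf.one_add (x : Bsf) : 1 + x = 1 := rfl

theorem Bsf.eq_zero_and_eq_one_of_add_eq_of_ne {x y : Bsf} (h : x + y = y) (hne : x ≠ y) :
    x = 0 ∧ y = 1 := by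
  revert x y; decide

theorem Bsf.ne_zero_of_add_eq {x y : Bsf} (h : x + y = y) (hx : x ≠ 0) : y ≠ 0 := by
  revert x y; decide

theorem Finsupp.single_one_add_single_one_ne {ι : Type} {i j : ι} (hij : i ≠ j) :
    single i (1 : Bsf) + single j 1 ≠ single i 1 := by
  intro h
  have := DFunLike.congr_fun h j
  simp [hij] at this

theorem Finsupp.exists_ne_of_add_eq_of_ne {ι : Type} {a b : ι →₀ Bsf} (hab : a + b = b)
    (ha : a ≠ 0) (hne : a ≠ b) : ∃ i j, i ≠ j ∧ b i ≠ 0 ∧ b j ≠ 0 := by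
  obtain ⟨i, hi⟩ := DFunLike.ne_iff.1 ha
  obtain ⟨j, hj⟩ := DFunLike.ne_iff.1 hne
  have habi : a i + b i = b i := DFunLike.congr_fun hab i
  obtain ⟨haj, hbj⟩ := Bsf.eq_zero_and_eq_one_of_add_eq_of_ne (DFunLike.congr_fun hab j) hj
  refine ⟨i, j, ?_, Bsf.ne_zero_of_add_eq habi hi, by simp [hbj]⟩
  rintro rfl
  exact hi haj

theorem IsSummandDecomp.eq_zero_of_add_eq {S M : Type} [Semiring S] [AddCommMonoid M]
    [Module S M] {p q : Submodule S M} (h : IsSummandDecomp p q) {x z : M} (hx : x ∈ p)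
    (hz : z ∈ q) (hxz : x + z = x) : z = 0 :=
  congrArg (fun ab : p × q => (ab.2 : M))
    (@h.1 (⟨x, hx⟩, ⟨z, hz⟩) (⟨x, hx⟩, 0) (by simpa using hxz))

theorem IsSummandDecomp.single_one_mem {ι : Type} {p q : Submodule Bsf (ι →₀ Bsf)}
    (h : IsSummandDecomp p q) {x : ι →₀ Bsf} (hx : x ∈ p) {j : ι} (hj : x j ≠ 0) :
    Finsupp.single j 1 ∈ p := by
  obtain ⟨⟨⟨y, hy⟩, ⟨z, hz⟩⟩, hyz : y + z = Finsupp.single j 1⟩ := h.2 (Finsupp.single j 1)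
  have hxz : x + z = x := by
    ext k
    rw [Finsupp.add_apply]
    by_cases hk : k = j
    · subst hk
      rw [Bsf.eq_one_of_ne_zero hj, Bsf.one_add]
    · have hyzk := DFunLike.congr_fun hyz k
      rw [Finsupp.add_apply, Finsupp.single_eq_of_ne hk] at hyzk
      rw [(Bsf.add_eq_zero_iff.1 hyzk).2, add_zero]
  rw [← hyz, h.eq_zero_of_add_eq hx hz hxz, add_zero]
  exact hy

theorem Pex_add_eq_left_or_right (x y : Pex) : x + y = x ∨ x + y = y := by
  obtain ⟨x, hx | hx | hx⟩ := x <;> obtain ⟨y, hy | hy | hy⟩ := y <;> subst hx hy <;>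
    simp only [Subtype.ext_iff, Submodule.coe_add] <;> decide

theorem Pex_not_stronglyProjective : ¬ StronglyProjective Bsf Pex := by
  rintro ⟨ι, p, q, hpq, ⟨f⟩⟩
  have hchain (y z : p) : y + z = y ∨ y + z = z := by
    simpa [← map_add, f.symm.injective.eq_iff] using
      Pex_add_eq_left_or_right (f.symm y) (f.symm z)
  let u : Pex := ⟨(0, 1), Or.inr (Or.inl rfl)⟩
  let v : Pex := ⟨(1, 1), Or.inr (Or.inr rfl)⟩
  have huv : u + v = v := Subtype.ext (by decide)
  obtain ⟨i, j, hij, hi, hj⟩ :=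
    Finsupp.exists_ne_of_add_eq_of_ne (a := (f u : ι →₀ Bsf)) (b := f v)
    (by rw [← Submodule.coe_add, ← map_add, huv])
    (by rw [Ne, Submodule.coe_eq_zero, f.map_eq_zero_iff]; decide)
    (Subtype.coe_injective.ne (f.injective.ne (by decide)))
  rcases hchain ⟨_, hpq.single_one_mem (f v).2 hi⟩ ⟨_, hpq.single_one_mem (f v).2 hj⟩ with h | h
  · exact Finsupp.single_one_add_single_one_ne hij (congrArg Subtype.val h)
  · exact Finsupp.single_one_add_single_one_ne hij.symm
      ((add_comm _ _).trans (congrArg Subtype.val h))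

theorem Pex.mk_add_mem (a b : Bsf) : (a, a + b) ∈ Pex := by
  change _ ∨ _ ∨ _
  revert a b
  decide

theorem Pex_projective : Module.Projective Bsf Pex := by
  let retraction : (Bsf × Bsf) →ₗ[Bsf] Pex :=
    ((LinearMap.fst Bsf Bsf Bsf).prod (LinearMap.fst Bsf Bsf Bsf + LinearMap.snd Bsf Bsf Bsf))
      |>.codRestrict Pex fun x => Pex.mk_add_mem x.1 x.2
  refine Module.Projective.of_split Pex.subtype retraction (LinearMap.ext ?_)
  rintro ⟨x, hx | hx | hx⟩ <;> subst hx <;> rfl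

/-- The subsemimodule `{(0,0), (0,1), (1,1)} ⊆ 𝔹²` is a finitely generated projective
`𝔹`-semimodule which is not strongly projective. -/
theorem Pex_projective_not_stronglyProjective :
    Module.Finite Bsf Pex ∧ Module.Projective Bsf Pex ∧ ¬ StronglyProjective Bsf Pex :=
  ⟨Module.Finite.of_finite, Pex_projective, Pex_not_stronglyProjective⟩
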